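/- For every i with 1 ≤ i ≤ n, the Dickson invariant d_{n,n-i} has the expansion d_{n,n-i} = ∑_{1 ≤ j_1 < j_2 < ⋯ < j_i ≤ n} ∏_{s=1}^{i} h_{j_s}^{p^{n-i+s-j_s}} in S, where the sum runs over all strictly increasing sequences 1 ≤ j_1 < ⋯ < j_i ≤ n. -/

import Mathlib

open MvPolynomial

/-- `V p n k` : the set of `𝔽_p`-linear combinations of the first `k` variables. -/
noncomputable def V (p n k : ℕ) [Fact p.Prime] : Finset (MvPolynomial (Fin n) (ZMod p)) :=
  (Finset.univ : Finset (Fin n → ZMod p)).image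
    (fun c => ∑ j ∈ Finset.univ.filter (fun j : Fin n => j.val < k), C (c j) * X j)

/-- `f p n k = ∏_{u ∈ V_k} (X - C u)`. -/
noncomputable def f (p n k : ℕ) [Fact p.Prime] :
    Polynomial (MvPolynomial (Fin n) (ZMod p)) :=
  ∏ u ∈ V p n k, (Polynomial.X - Polynomial.C u)

/-- Dickson invariant `d_{k,i}`. -/
noncomputable def d (p n k i : ℕ) [Fact p.Prime] : MvPolynomial (Fin n) (ZMod p) :=
  (-1) ^ (k - i) * (f p n k).coeff (p ^ i)

/-- Borel generator: `hGen p n j` is `h_{j+1}` of the paper. -/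
noncomputable def hGen (p n : ℕ) [Fact p.Prime] (j : Fin n) : MvPolynomial (Fin n) (ZMod p) :=
  (Polynomial.eval (X j) (f p n j.val)) ^ (p - 1)

/-- Action of `GL_n(𝔽_p)` on `S` by linear substitution `g · y_j = ∑_i g_{ij} y_i`. -/
noncomputable def gact (p n : ℕ) [Fact p.Prime] (g : GL (Fin n) (ZMod p)) :
    MvPolynomial (Fin n) (ZMod p) →ₐ[ZMod p] MvPolynomial (Fin n) (ZMod p) :=
  aeval (fun j : Fin n => ∑ i : Fin n, C ((g : Matrix (Fin n) (Fin n) (ZMod p)) i j) * X i)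

/-!
Each `f_k` is additive in `X` (hence `𝔽_p`-linear). With `c = f_k(y_{k+1})`, every element
`u + a y_{k+1}` of `V_{k+1}` is sent by `f_k` to `a c`, a root of `T^p - c^{p-1} T`; so
`f_k^p - h_{k+1} f_k` is monic of degree `p^{k+1}` and vanishes on the `p^{k+1}` points of
`V_{k+1}`, which forces `f_{k+1} = f_k^p - h_{k+1} f_k`, and this formula in turn makes `f_{k+1}`
additive. Comparing coefficients of `X^{p^i}` gives `d_{k+1,i} = d_{k,i-1}^p + h_{k+1} d_{k,i}`.
The sum over increasing sequences obeys the same recursion: sequences avoiding `k+1` contribute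
a `p`-th power (every exponent grows by one), those ending in `k+1` contribute `h_{k+1}` times
the sum for `i - 1`.
-/

namespace Polynomial

variable {R : Type*}

theorem prod_X_sub_C_eq_of_monic [CommRing R] [IsDomain R] {P : R[X]} {W : Finset R}
    (hP : P.Monic) (hdeg : P.natDegree = W.card) (hroot : ∀ w ∈ W, P.IsRoot w) :
    ∏ w ∈ W, (X - C w) = P := by
  have hle : W.val ≤ P.roots :=
    (Multiset.le_iff_subset W.nodup).2 fun w hw => (mem_roots hP.ne_zero).2 (hroot w hw)
  have hroots : P.roots = W.val :=
    (Multiset.eq_of_le_of_card_le hle ((card_roots' P).trans hdeg.le)).symm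
  rw [Finset.prod_eq_multiset_prod, ← hroots]
  exact prod_multiset_X_sub_C_of_monic_of_roots_card_eq hP (by rw [hroots, hdeg]; rfl)

section Monic

variable [Ring R] {F : R[X]} {p : ℕ}

theorem Monic.natDegree_C_mul_lt_pow (hF : F.Monic) (hdeg : 0 < F.natDegree) (hp : 1 < p)
    (c : R) : (C c * F).natDegree < (F ^ p).natDegree := by
  rw [hF.natDegree_pow]
  exact (natDegree_C_mul_le c F).trans_lt (lt_mul_left hdeg hp)

theorem Monic.pow_sub_C_mul (hF : F.Monic) (hdeg : 0 < F.natDegree) (hp : 1 < p) (c : R) :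
    (F ^ p - C c * F).Monic :=
  (hF.pow p).sub_of_left (degree_lt_degree (hF.natDegree_C_mul_lt_pow hdeg hp c))

theorem Monic.natDegree_pow_sub_C_mul (hF : F.Monic) (hdeg : 0 < F.natDegree) (hp : 1 < p)
    (c : R) : (F ^ p - C c * F).natDegree = p * F.natDegree := by
  rw [natDegree_sub_eq_left_of_natDegree_lt (hF.natDegree_C_mul_lt_pow hdeg hp c),
    hF.natDegree_pow]

end Monic

section ExpChar

variable (p : ℕ)

theorem coeff_pow_expChar_mul [CommSemiring R] [ExpChar R p] (F : R[X]) (m : ℕ) :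
    (F ^ p).coeff (m * p) = F.coeff m ^ p := by
  rw [← map_frobenius_expand, coeff_map, coeff_expand_mul (expChar_pos R p), frobenius_def]

theorem coeff_pow_expChar_of_not_dvd [CommSemiring R] [ExpChar R p] (F : R[X]) {m : ℕ}
    (hm : ¬ p ∣ m) : (F ^ p).coeff m = 0 := by
  rw [← map_frobenius_expand, coeff_map, coeff_expand (expChar_pos R p), if_neg hm, map_zero]

variable {p} [CommRing R] {F : R[X]}

theorem eval_pow_expChar_sub_C_mul_add [ExpChar R p]
    (hF : ∀ x y, F.eval (x + y) = F.eval x + F.eval y) (c x y : R) :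
    (F ^ p - C c * F).eval (x + y) = (F ^ p - C c * F).eval x + (F ^ p - C c * F).eval y := by
  simp only [eval_sub, eval_pow, eval_mul, eval_C, hF, add_pow_expChar]
  ring

theorem isRoot_pow_sub_C_mul_of_eval_add [Fact p.Prime] [Algebra (ZMod p) R]
    (hF : ∀ x y, F.eval (x + y) = F.eval x + F.eval y) {u : R} (hu : F.IsRoot u) (y : R)
    (a : ZMod p) : (F ^ p - C (F.eval y ^ (p - 1)) * F).IsRoot (u + a • y) := by
  have hFa : F.eval (u + a • y) = a • F.eval y := by
    rw [hF, hu.eq_zero, zero_add]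
    exact ZMod.map_smul (AddMonoidHom.mk' F.eval hF) a y
  simp only [IsRoot, eval_sub, eval_pow, eval_mul, eval_C, hFa, mul_smul_comm,
    pow_sub_one_mul (Fact.out : p.Prime).ne_zero]
  rw [_root_.smul_pow, ZMod.pow_card, sub_self]

end ExpChar

end Polynomial

open Finset

theorem StrictMono.val_add_sub_le {i n : ℕ} {j : Fin i → Fin n} (hj : StrictMono j)
    {s t : Fin i} (hst : s ≤ t) : (j s : ℕ) + (t - s) ≤ j t := by
  have hcard := card_le_card_of_injOn j (s := Icc s t) (t := Icc (j s) (j t))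
    (fun x hx => by
      rw [coe_Icc, Set.mem_Icc] at hx ⊢
      exact ⟨hj.monotone hx.1, hj.monotone hx.2⟩)
    hj.injective.injOn
  rw [Fin.card_Icc, Fin.card_Icc] at hcard
  have := hj.monotone hst
  rw [Fin.le_def] at hst this
  omega

theorem Fin.strictMono_snoc {α : Type*} [Preorder α] {m : ℕ} {j : Fin m → α}
    (hj : StrictMono j) {a : α} (ha : ∀ t, j t < a) :
    StrictMono (Fin.snoc j a : Fin (m + 1) → α) := by
  intro s t hst
  induction t using Fin.lastCases with
  | last =>
    induction s using Fin.lastCases with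
    | last => exact absurd hst (lt_irrefl _)
    | cast s => simpa using ha s
  | cast t =>
    induction s using Fin.lastCases with
    | last => exact absurd hst (Fin.le_last _).not_gt
    | cast s => simpa using hj (Fin.castSucc_lt_castSucc_iff.1 hst)

open scoped Classical in
noncomputable def strictMonoTuples (n k i : ℕ) : Finset (Fin i → Fin n) :=
  univ.filter fun j => StrictMono j ∧ ∀ s, (j s : ℕ) < k

section StrictMonoTuples

variable {n k i : ℕ}

theorem mem_strictMonoTuples {j : Fin i → Fin n} :
    j ∈ strictMonoTuples n k i ↔ StrictMono j ∧ ∀ s, (j s : ℕ) < k := by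
  simp [strictMonoTuples]

theorem le_of_mem_strictMonoTuples {j : Fin i → Fin n} (hj : j ∈ strictMonoTuples n k i) :
    i ≤ k := by
  obtain ⟨hmono, hlt⟩ := mem_strictMonoTuples.1 hj
  cases i with
  | zero => exact Nat.zero_le k
  | succ m =>
    have hspread := hmono.val_add_sub_le (Fin.zero_le (Fin.last m))
    have hlast := hlt (Fin.last m)
    rw [Fin.val_last, Fin.val_zero] at hspread
    omega

theorem strictMonoTuples_eq_empty (h : k < i) : strictMonoTuples n k i = ∅ :=
  eq_empty_of_forall_notMem fun _ hj => (le_of_mem_strictMonoTuples hj).not_gt h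

theorem filter_strictMonoTuples_succ_of_lt (m : ℕ) :
    (strictMonoTuples n (k + 1) (m + 1)).filter (fun j => (j (Fin.last m) : ℕ) < k)
      = strictMonoTuples n k (m + 1) := by
  ext j
  simp only [mem_filter, mem_strictMonoTuples]
  constructor
  · rintro ⟨⟨hmono, -⟩, hlast⟩
    exact ⟨hmono, fun s => (Fin.le_def.1 (hmono.monotone (Fin.le_last s))).trans_lt hlast⟩
  · rintro ⟨hmono, hlt⟩
    exact ⟨⟨hmono, fun s => (hlt s).trans (Nat.lt_succ_self k)⟩, hlt _⟩

theorem filter_strictMonoTuples_succ_of_not_lt (hk : k < n) (m : ℕ) :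
    (strictMonoTuples n (k + 1) (m + 1)).filter (fun j => ¬ (j (Fin.last m) : ℕ) < k)
      = (strictMonoTuples n k m).image (fun j => Fin.snoc j ⟨k, hk⟩) := by
  ext j
  simp only [mem_filter, mem_image, mem_strictMonoTuples]
  constructor
  · rintro ⟨⟨hmono, hlt⟩, hge⟩
    have hlast : j (Fin.last m) = ⟨k, hk⟩ :=
      Fin.ext (by have := hlt (Fin.last m); dsimp only; omega)
    refine ⟨Fin.init j, ⟨hmono.comp (Fin.strictMono_castSucc), fun t => ?_⟩, ?_⟩
    · exact (Fin.lt_def.1 (hmono (Fin.castSucc_lt_last t))).trans_eq (congrArg Fin.val hlast)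
    · rw [← hlast, Fin.snoc_init_self]
  · rintro ⟨j', ⟨hmono, hlt⟩, rfl⟩
    refine ⟨⟨Fin.strictMono_snoc hmono fun t => hlt t, fun s => ?_⟩, by simp⟩
    induction s using Fin.lastCases with
    | last => simp
    | cast t => simpa using (hlt t).trans (Nat.lt_succ_self k)

end StrictMonoTuples

section StrictMonoSum

variable {R : Type*} [CommSemiring R] (p : ℕ) {n : ℕ} (h : Fin n → R)

noncomputable def strictMonoSum (k i : ℕ) : R :=
  ∑ j ∈ strictMonoTuples n k i, ∏ s : Fin i, h (j s) ^ p ^ (k - i + s - j s)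

theorem strictMonoSum_zero (k : ℕ) : strictMonoSum p h k 0 = 1 := by
  have : strictMonoTuples n k 0 = {Fin.elim0} :=
    eq_singleton_iff_unique_mem.2
      ⟨mem_strictMonoTuples.2 ⟨fun s => s.elim0, fun s => s.elim0⟩,
        fun _ _ => funext fun s => s.elim0⟩
  simp [strictMonoSum, this]

theorem strictMonoSum_eq_zero {k i : ℕ} (hki : k < i) : strictMonoSum p h k i = 0 := by
  simp [strictMonoSum, strictMonoTuples_eq_empty hki]

theorem prod_pow_of_mem_strictMonoTuples {k m : ℕ} {j : Fin (m + 1) → Fin n}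
    (hj : j ∈ strictMonoTuples n k (m + 1)) :
    ∏ s, h (j s) ^ p ^ (k + 1 - (m + 1) + s - j s)
      = (∏ s, h (j s) ^ p ^ (k - (m + 1) + s - j s)) ^ p := by
  obtain ⟨hmono, hlt⟩ := mem_strictMonoTuples.1 hj
  rw [← prod_pow]
  refine prod_congr rfl fun s _ => ?_
  have h0 := hmono.val_add_sub_le (Fin.zero_le s)
  have hs := hmono.val_add_sub_le (Fin.le_last s)
  have := hlt (Fin.last m)
  simp only [Fin.val_last, Fin.val_zero] at h0 hs
  rw [← pow_mul, ← pow_succ,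
    show k - (m + 1) + s - j s + 1 = k + 1 - (m + 1) + s - j s by omega]

theorem prod_pow_snoc_of_mem_strictMonoTuples {k m : ℕ} (hk : k < n) {j : Fin m → Fin n}
    (hj : j ∈ strictMonoTuples n k m) :
    ∏ s, h (Fin.snoc (α := fun _ => Fin n) j ⟨k, hk⟩ s) ^
        p ^ (k + 1 - (m + 1) + s - Fin.snoc (α := fun _ => Fin n) j ⟨k, hk⟩ s)
      = h ⟨k, hk⟩ * ∏ s, h (j s) ^ p ^ (k - m + s - j s) := by
  have hmk := le_of_mem_strictMonoTuples hj
  rw [Fin.prod_univ_castSucc, mul_comm]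
  simp only [Fin.snoc_castSucc, Fin.snoc_last, Fin.val_castSucc, Fin.val_last,
    Nat.add_sub_add_right, show k - m + m - k = 0 by omega, pow_zero, pow_one]

variable [ExpChar R p]

theorem strictMonoSum_succ_succ {k : ℕ} (hk : k < n) (m : ℕ) :
    strictMonoSum p h (k + 1) (m + 1)
      = strictMonoSum p h k (m + 1) ^ p + h ⟨k, hk⟩ * strictMonoSum p h k m := by
  rw [strictMonoSum, ← sum_filter_add_sum_filter_not _ (fun j => (j (Fin.last m) : ℕ) < k),
    filter_strictMonoTuples_succ_of_lt, filter_strictMonoTuples_succ_of_not_lt hk,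
    sum_image fun _ _ _ _ hsnoc => by simpa using congrArg Fin.init hsnoc,
    strictMonoSum, strictMonoSum, sum_pow_char, mul_sum]
  congr 1
  · exact sum_congr rfl fun j hj => prod_pow_of_mem_strictMonoTuples p h hj
  · exact sum_congr rfl fun j hj => prod_pow_snoc_of_mem_strictMonoTuples p h hk hj

end StrictMonoSum

section Dickson

variable {p n : ℕ} [Fact p.Prime]

theorem coeff_single_sum_C_mul_X (k : ℕ) (c : Fin n → ZMod p) (i : Fin n) :
    coeff (Finsupp.single i 1) (∑ j ∈ univ.filter (fun j : Fin n => j.val < k), C (c j) * X j)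
      = if i.val < k then c i else 0 := by
  simp [coeff_sum, coeff_C_mul, coeff_X, Finsupp.single_left_inj one_ne_zero]

theorem V_zero : V p n 0 = {0} := by
  simp [V, image_const univ_nonempty]

theorem exists_add_smul_of_mem_V_succ (j : Fin n) {v : MvPolynomial (Fin n) (ZMod p)}
    (hv : v ∈ V p n (j.val + 1)) : ∃ u ∈ V p n j.val, ∃ a : ZMod p, v = u + a • X j := by
  obtain ⟨c, -, rfl⟩ := mem_image.1 hv
  refine ⟨_, mem_image_of_mem _ (mem_univ c), c j, ?_⟩
  have hj : C (c j) * X j = ∑ i, if i = j then C (c i) * X i else 0 := by simp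
  rw [smul_eq_C_mul, sum_filter, sum_filter, hj, ← sum_add_distrib]
  refine sum_congr rfl fun i _ => ?_
  by_cases hij : i = j
  · simp [hij]
  · have hlt : i.val < j.val + 1 ↔ i.val < j.val := by have := Fin.val_ne_of_ne hij; omega
    simp [hlt, hij]

theorem card_V {k : ℕ} (hk : k ≤ n) : (V p n k).card = p ^ k := by
  let coeffs : MvPolynomial (Fin n) (ZMod p) → Fin k → ZMod p :=
    fun u t => coeff (Finsupp.single (Fin.castLE hk t) 1) u
  have hinj : Set.InjOn coeffs (V p n k) := by
    intro u hu u' hu' h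
    obtain ⟨c, -, rfl⟩ := mem_image.1 hu
    obtain ⟨c', -, rfl⟩ := mem_image.1 hu'
    refine sum_congr rfl fun i hi => ?_
    have hik : i.val < k := (mem_filter.1 hi).2
    have := congr_fun h ⟨i, hik⟩
    simp only [coeffs, coeff_single_sum_C_mul_X] at this
    simpa [hik] using this
  have himage : (V p n k).image coeffs = univ := by
    refine eq_univ_of_forall fun e => mem_image.2 ⟨_, mem_image_of_mem _
      (mem_univ fun i : Fin n => if h : i.val < k then e ⟨i, h⟩ else 0), funext fun t => ?_⟩
    simp [coeffs, coeff_single_sum_C_mul_X]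
  rw [← card_image_of_injOn hinj, himage, card_univ, Fintype.card_fun, ZMod.card,
    Fintype.card_fin]

theorem f_monic (k : ℕ) : (f p n k).Monic :=
  Polynomial.monic_prod_of_monic _ _ fun u _ => Polynomial.monic_X_sub_C u

theorem natDegree_f {k : ℕ} (hk : k ≤ n) : (f p n k).natDegree = p ^ k := by
  rw [f, Polynomial.natDegree_prod_of_monic _ _ fun u _ => Polynomial.monic_X_sub_C u]
  simp [card_V hk]

theorem isRoot_f {k : ℕ} {u : MvPolynomial (Fin n) (ZMod p)} (hu : u ∈ V p n k) :
    (f p n k).IsRoot u := by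
  simp only [f, Polynomial.IsRoot, Polynomial.eval_prod, Polynomial.eval_sub,
    Polynomial.eval_X, Polynomial.eval_C]
  exact prod_eq_zero hu (sub_self u)

theorem f_zero : f p n 0 = Polynomial.X := by
  simp [f, V_zero]

theorem f_succ_of_eval_add (j : Fin n)
    (hadd : ∀ x y, (f p n j).eval (x + y) = (f p n j).eval x + (f p n j).eval y) :
    f p n (j.val + 1) = f p n j ^ p - Polynomial.C (hGen p n j) * f p n j := by
  have hp : 1 < p := (Fact.out : p.Prime).one_lt
  have hdeg : 0 < (f p n j).natDegree := by rw [natDegree_f j.is_lt.le]; positivity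
  refine Polynomial.prod_X_sub_C_eq_of_monic ((f_monic j).pow_sub_C_mul hdeg hp _) ?_
    fun v hv => ?_
  · rw [(f_monic j).natDegree_pow_sub_C_mul hdeg hp, natDegree_f j.is_lt.le, card_V j.is_lt,
      pow_succ']
  · obtain ⟨u, hu, a, rfl⟩ := exists_add_smul_of_mem_V_succ j hv
    exact Polynomial.isRoot_pow_sub_C_mul_of_eval_add hadd (isRoot_f hu) (X j) a

theorem eval_f_add {k : ℕ} (hk : k ≤ n) (x y : MvPolynomial (Fin n) (ZMod p)) :
    (f p n k).eval (x + y) = (f p n k).eval x + (f p n k).eval y := by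
  induction k generalizing x y with
  | zero => simp [f_zero]
  | succ k ih =>
    rw [f_succ_of_eval_add ⟨k, hk⟩ (ih (by omega))]
    exact Polynomial.eval_pow_expChar_sub_C_mul_add (ih (by omega)) _ x y

theorem f_succ (j : Fin n) :
    f p n (j.val + 1) = f p n j ^ p - Polynomial.C (hGen p n j) * f p n j :=
  f_succ_of_eval_add j (eval_f_add j.is_lt.le)

theorem d_self {k : ℕ} (hk : k ≤ n) : d p n k k = 1 := by
  rw [d, Nat.sub_self, pow_zero, one_mul, ← natDegree_f hk]
  exact (f_monic k).coeff_natDegree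

theorem d_succ_succ (j : Fin n) {i : ℕ} (hij : i < j.val) :
    d p n (j.val + 1) (i + 1) = d p n j i ^ p + hGen p n j * d p n j (i + 1) := by
  have hcoeff : (f p n (j.val + 1)).coeff (p ^ (i + 1))
      = (f p n j).coeff (p ^ i) ^ p - hGen p n j * (f p n j).coeff (p ^ (i + 1)) := by
    rw [f_succ, Polynomial.coeff_sub, Polynomial.coeff_C_mul, pow_succ,
      Polynomial.coeff_pow_expChar_mul]
  obtain ⟨t, ht⟩ : ∃ t, j.val = i + 1 + t := ⟨j.val - (i + 1), by omega⟩
  rw [d, d, d, hcoeff, ht, show i + 1 + t + 1 - (i + 1) = t + 1 by omega,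
    show i + 1 + t - i = t + 1 by omega, Nat.add_sub_cancel_left, mul_pow, ← pow_mul, pow_mul',
    neg_one_pow_char (MvPolynomial (Fin n) (ZMod p)) p]
  ring

theorem d_succ_zero (j : Fin n) : d p n (j.val + 1) 0 = hGen p n j * d p n j 0 := by
  rw [d, d, f_succ, Polynomial.coeff_sub, Polynomial.coeff_C_mul, pow_zero,
    Polynomial.coeff_pow_expChar_of_not_dvd _ _ (Fact.out : p.Prime).not_dvd_one, Nat.sub_zero,
    Nat.sub_zero, pow_succ]
  ring

theorem d_eq_strictMonoSum {k : ℕ} (hk : k ≤ n) {i : ℕ} (hi : i ≤ k) :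
    d p n k (k - i) = strictMonoSum p (hGen p n) k i := by
  induction k generalizing i with
  | zero => rw [Nat.le_zero.1 hi, strictMonoSum_zero, d_self hk]
  | succ k ih =>
    have hk' : k ≤ n := Nat.le_of_succ_le hk
    cases i with
    | zero => rw [strictMonoSum_zero, Nat.sub_zero, d_self hk]
    | succ m =>
      rw [strictMonoSum_succ_succ p _ hk]
      rcases Nat.lt_or_eq_of_le (Nat.le_of_succ_le_succ hi) with hmk | rfl
      · rw [← ih hk' hmk, ← ih hk' hmk.le, Nat.add_sub_add_right,
          show k - m = k - (m + 1) + 1 by omega, d_succ_succ ⟨k, hk⟩ (by dsimp only; omega)]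
      · rw [strictMonoSum_eq_zero p _ (Nat.lt_succ_self m), zero_pow (Fact.out : p.Prime).ne_zero,
          zero_add, ← ih hk' le_rfl, Nat.sub_self, Nat.sub_self]
        exact d_succ_zero ⟨m, hk⟩

end Dickson

open scoped Classical in
theorem stmt9_general (p n : ℕ) [Fact p.Prime] (i : ℕ) (hi2 : i ≤ n) :
    d p n n (n - i) =
      ∑ j ∈ Finset.univ.filter (fun j : Fin i → Fin n => StrictMono j),
        ∏ s : Fin i, hGen p n (j s) ^ p ^ (n - i + s.val - (j s).val) := by
  rw [d_eq_strictMonoSum le_rfl hi2, strictMonoSum, strictMonoTuples]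
  exact sum_congr (filter_congr fun j _ => and_iff_left fun s => (j s).is_lt) fun _ _ => rfl

open scoped Classical in
/-- `d_{n,n-i} = ∑_{1 ≤ j_1 < ⋯ < j_i ≤ n} ∏_{s=1}^i h_{j_s}^{p^{n-i+s-j_s}}`. -/
theorem stmt9 (p n : ℕ) [Fact p.Prime] (i : ℕ) (hi1 : 1 ≤ i) (hi2 : i ≤ n) :
    d p n n (n - i) =
      ∑ j ∈ Finset.univ.filter (fun j : Fin i → Fin n => StrictMono j),
        ∏ s : Fin i, hGen p n (j s) ^ p ^ (n - i + s.val - (j s).val) :=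
  stmt9_general p n i hi2
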